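/- Under the standing hypotheses with 1_g ≠ 0 for all g ∈ 𝒢, let ℋ ∈ wSub_gt(𝒢) with the chosen decomposition and transversals, let T = S^{α_ℋ} and T_{y_j} = S_{y_j}^{α_{ℋ_j(y_j)}} for 1 ≤ j ≤ r. The following are equivalent: (i) T is α-strong; (ii) for any g, h ∈ 𝒢 with t(g) = t(h) and g⁻¹h ∉ 𝒢_T and for any nonzero idempotent e ∈ S_g ∪ S_h, there exists t ∈ T such that α_g(t·1_{g⁻¹})·e ≠ α_h(t·1_{h⁻¹})·e; (iii) T_{y_j} is α_{𝒢(y_j,y_j)}-strong for all 1 ≤ j ≤ r. -/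

import Mathlib

open CategoryTheory

namespace PaperGalois

/-- A unital partial action of a groupoid (with object/morphism data given by a
`CategoryTheory.Groupoid` structure on `Obj`) on a commutative ring `S`.
For a morphism `g : a ⟶ b` (source `a`, target `b`), `e g` is the central idempotent
with `S_g = S • e g`, and `act g s` encodes `α_g(s · 1_{g⁻¹})`. -/
structure UPA (Obj : Type*) [Groupoid Obj] (S : Type*) [CommRing S] where
  e : ∀ ⦃a b : Obj⦄, (a ⟶ b) → S
  act : ∀ ⦃a b : Obj⦄, (a ⟶ b) → S → S
  idem : ∀ ⦃a b : Obj⦄ (g : a ⟶ b), e g * e g = e g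
  e_le : ∀ ⦃a b : Obj⦄ (g : a ⟶ b), e g * e (𝟙 b) = e g
  act_proj : ∀ ⦃a b : Obj⦄ (g : a ⟶ b) (s : S), act g (s * e (Groupoid.inv g)) = act g s
  act_mem : ∀ ⦃a b : Obj⦄ (g : a ⟶ b) (s : S), act g s * e g = act g s
  act_add : ∀ ⦃a b : Obj⦄ (g : a ⟶ b) (s t : S), act g (s + t) = act g s + act g t
  act_mul : ∀ ⦃a b : Obj⦄ (g : a ⟶ b) (s t : S), act g (s * t) = act g s * act g t
  act_unit : ∀ ⦃a b : Obj⦄ (g : a ⟶ b), act g (e (Groupoid.inv g)) = e g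
  act_id : ∀ (a : Obj) (s : S), act (𝟙 a) s = s * e (𝟙 a)
  act_inv : ∀ ⦃a b : Obj⦄ (g : a ⟶ b) (s : S),
      act (Groupoid.inv g) (act g s) = s * e (Groupoid.inv g)
  act_comp : ∀ ⦃a b c : Obj⦄ (h : a ⟶ b) (g : b ⟶ c) (s : S),
      act g (act h s) = act (h ≫ g) s * e g

namespace UPA

variable {Obj : Type*} [Groupoid Obj] {S : Type*} [CommRing S] (α : UPA Obj S)

lemma act_zero ⦃a b : Obj⦄ (g : a ⟶ b) : α.act g 0 = 0 := by
  have h := α.act_add g 0 0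
  rw [add_zero] at h
  exact (left_eq_add.mp h)

lemma act_neg ⦃a b : Obj⦄ (g : a ⟶ b) (s : S) : α.act g (-s) = -(α.act g s) := by
  have h := α.act_add g s (-s)
  rw [add_neg_cancel, α.act_zero] at h
  exact (eq_neg_of_add_eq_zero_right h.symm)

lemma act_one ⦃a b : Obj⦄ (g : a ⟶ b) : α.act g 1 = α.e g := by
  have h := α.act_proj g 1
  rw [one_mul, α.act_unit] at h
  exact h.symm

lemma act_e_src ⦃a b : Obj⦄ (g : a ⟶ b) : α.act g (α.e (𝟙 a)) = α.e g := by
  have h1 : α.e (𝟙 a) * α.e (Groupoid.inv g) = α.e (Groupoid.inv g) := by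
    rw [mul_comm]; exact α.e_le (Groupoid.inv g)
  have h2 := α.act_proj g (α.e (𝟙 a))
  rw [h1, α.act_unit] at h2
  exact h2.symm

/-- The set of `α`-invariant elements of `S` relative to a subgroupoid `H`:
`S^{α_H} = {s ∈ S : α_h(s·1_{h⁻¹}) = s·1_h for all h ∈ H}`. -/
def invSet (H : Subgroupoid Obj) : Set S :=
  {s : S | ∀ ⦃a b : Obj⦄ (h : a ⟶ b), h ∈ H.arrows a b → α.act h s = s * α.e h}

/-- The invariants `S_y^{α_A}` of the corner ring `S_y = S·1_y` under a set `A`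
of loops at `y`. -/
def grpInvSet (y : Obj) (A : Set (y ⟶ y)) : Set S :=
  {s : S | s * α.e (𝟙 y) = s ∧ ∀ g ∈ A, α.act g s = s * α.e g}

/-- The arrows `a ⟶ b` of the groupoid acting trivially on the subset `T ⊆ S`;
for `T` a subring this gives `𝒢_T`. -/
def fixingSet (T : Set S) (a b : Obj) : Set (a ⟶ b) :=
  {g : a ⟶ b | ∀ t ∈ T, α.act g t = t * α.e g}

/-- `⊕_{y ∈ Z} S_y`, the part of `S` supported on a set `Z` of objects. -/
def partSet (Z : Set Obj) : Set S :=
  {s : S | ∀ y : Obj, y ∉ Z → s * α.e (𝟙 y) = 0}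

/-- `T·1_y ⊆ S_y` for a subset `T ⊆ S`. -/
def cornerSet (T : Set S) (y : Obj) : Set S :=
  (fun t => t * α.e (𝟙 y)) '' T

/-- `T' ⊆ S_y` is `α_{𝒢(y,z)}`-strong. -/
def strongAt (T' : Set S) (a b : Obj) : Prop :=
  ∀ g h : a ⟶ b, (h ≫ Groupoid.inv g) ∉ α.fixingSet T' a a →
    ∀ f : S, f * f = f → f ≠ 0 → (f * α.e g = f ∨ f * α.e h = f) →
      ∃ t ∈ T', α.act g t * f ≠ α.act h t * f

/-- `T ⊆ S` is `α`-strong. -/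
def IsStrong (T : Set S) : Prop :=
  ∀ a b : Obj, α.strongAt (α.cornerSet T a) a b

/-- Existence of a partial Galois coordinate system for the restriction of `α` to the
subgroupoid `H` acting on `S_H ⊆ S` (for `H = ⊤`, `Sub = univ` this says that
`S^{α_𝒢} ⊆ S` is an `α_𝒢`-partial Galois extension). -/
def IsGaloisCoordSystem (H : Subgroupoid Obj) (Sub : Set S) : Prop :=
  ∃ (m : ℕ) (av bv : Fin m → S),
    (∀ i, av i ∈ Sub) ∧ (∀ i, bv i ∈ Sub) ∧
    (∀ ⦃a b : Obj⦄ (g : a ⟶ b), g ∈ H.arrows a b → a ≠ b →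
        ∑ i, av i * α.act g (bv i) = 0) ∧
    (∀ (a : Obj) (g : a ⟶ a), g ∈ H.arrows a a → g ≠ 𝟙 a →
        ∑ i, av i * α.act g (bv i) = 0) ∧
    (∀ a : Obj, a ∈ H.objs → ∑ i, av i * α.act (𝟙 a) (bv i) = α.e (𝟙 a))

/-- Group-type condition for the restriction of `α` to `H`, at the base object `u`:
there is a transversal (inside `H`) from `u` to every object of the `H`-component of `u`
whose ideals are as large as possible. -/
def IsGroupTypeAt (H : Subgroupoid Obj) (u : Obj) : Prop :=
  ∃ σ : ∀ v : Obj, (H.arrows u v).Nonempty → (u ⟶ v),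
    (∀ v hv, σ v hv ∈ H.arrows u v) ∧
    (∀ h, σ u h = 𝟙 u) ∧
    (∀ v hv, α.e (Groupoid.inv (σ v hv)) = α.e (𝟙 u) ∧ α.e (σ v hv) = α.e (𝟙 v))

/-- The restriction `α_H` of `α` to the subgroupoid `H` is of group-type. -/
def IsGroupType (H : Subgroupoid Obj) : Prop :=
  ∀ u ∈ H.objs, α.IsGroupTypeAt H u

end UPA

structure SubCorner (S : Type*) [CommRing S] where
  carrier : Set S
  unit : S
  unit_mem : unit ∈ carrier
  mul_unit : ∀ s ∈ carrier, s * unit = s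
  add_mem : ∀ ⦃s t : S⦄, s ∈ carrier → t ∈ carrier → s + t ∈ carrier
  mul_mem : ∀ ⦃s t : S⦄, s ∈ carrier → t ∈ carrier → s * t ∈ carrier
  neg_mem : ∀ ⦃s : S⦄, s ∈ carrier → -s ∈ carrier
  zero_mem : (0 : S) ∈ carrier

namespace SubCorner

variable {S : Type*} [CommRing S]

lemma nsmul_mem (P : SubCorner S) (n : ℕ) {s : S} (hs : s ∈ P.carrier) :
    n • s ∈ P.carrier := by
  induction n with
  | zero => simpa using P.zero_mem
  | succ n ih => rw [succ_nsmul]; exact P.add_mem ih hs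

lemma zsmul_mem (P : SubCorner S) (n : ℤ) {s : S} (hs : s ∈ P.carrier) :
    n • s ∈ P.carrier := by
  cases n with
  | ofNat n => simpa [natCast_zsmul] using P.nsmul_mem n hs
  | negSucc n => rw [negSucc_zsmul]; exact P.neg_mem (P.nsmul_mem (n+1) hs)

instance (P : SubCorner S) : CommRing ↥P.carrier where
  add a b := ⟨a.1 + b.1, P.add_mem a.2 b.2⟩
  mul a b := ⟨a.1 * b.1, P.mul_mem a.2 b.2⟩
  neg a := ⟨-a.1, P.neg_mem a.2⟩
  zero := ⟨0, P.zero_mem⟩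
  one := ⟨P.unit, P.unit_mem⟩
  add_assoc a b c := Subtype.ext (add_assoc _ _ _)
  zero_add a := Subtype.ext (zero_add _)
  add_zero a := Subtype.ext (add_zero _)
  add_comm a b := Subtype.ext (add_comm _ _)
  mul_assoc a b c := Subtype.ext (mul_assoc _ _ _)
  one_mul a := Subtype.ext (by
    show P.unit * a.1 = a.1
    rw [mul_comm]; exact P.mul_unit a.1 a.2)
  mul_one a := Subtype.ext (P.mul_unit a.1 a.2)
  left_distrib a b c := Subtype.ext (left_distrib _ _ _)
  right_distrib a b c := Subtype.ext (right_distrib _ _ _)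
  mul_comm a b := Subtype.ext (mul_comm _ _)
  zero_mul a := Subtype.ext (zero_mul _)
  mul_zero a := Subtype.ext (mul_zero _)
  neg_add_cancel a := Subtype.ext (neg_add_cancel _)
  nsmul n a := ⟨n • a.1, P.nsmul_mem n a.2⟩
  nsmul_zero a := Subtype.ext (zero_nsmul _)
  nsmul_succ n a := Subtype.ext (succ_nsmul _ _)
  zsmul n a := ⟨n • a.1, P.zsmul_mem n a.2⟩
  zsmul_zero' a := Subtype.ext (zero_zsmul _)
  zsmul_succ' n a := Subtype.ext (by
    show ((n.succ : ℤ)) • a.1 = (n : ℤ) • a.1 + a.1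
    rw [Int.natCast_succ, add_zsmul, one_zsmul])
  zsmul_neg' n a := Subtype.ext (by
    show (Int.negSucc n) • a.1 = -(((n.succ : ℤ)) • a.1)
    rw [negSucc_zsmul]
    norm_cast)

def incl {P Q : SubCorner S} (hle : P.carrier ⊆ Q.carrier) (hu : P.unit = Q.unit) :
    ↥P.carrier →+* ↥Q.carrier where
  toFun a := ⟨a.1, hle a.2⟩
  map_one' := Subtype.ext hu
  map_mul' _ _ := rfl
  map_zero' := rfl
  map_add' _ _ := rfl

def IsSepExt (P Q : SubCorner S) (hle : P.carrier ⊆ Q.carrier) (hu : P.unit = Q.unit) : Prop :=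
  letI : Algebra ↥P.carrier ↥Q.carrier := (incl hle hu).toAlgebra
  ∃ ε : TensorProduct ↥P.carrier ↥Q.carrier ↥Q.carrier,
    (∀ t : ↥Q.carrier,
        (TensorProduct.tmul ↥P.carrier t (1 : ↥Q.carrier)) * ε
          = ε * (TensorProduct.tmul ↥P.carrier (1 : ↥Q.carrier) t)) ∧
    LinearMap.mul' ↥P.carrier ↥Q.carrier ε = 1

end SubCorner

/-- A `Subring` of `S`, seen as a corner subring with identity `1`. -/
def Subring.toSC {S : Type*} [CommRing S] (T : Subring S) : SubCorner S where
  carrier := (T : Set S)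
  unit := 1
  unit_mem := T.one_mem
  mul_unit := fun s _ => mul_one s
  add_mem := fun _ _ hs ht => T.add_mem hs ht
  mul_mem := fun _ _ hs ht => T.mul_mem hs ht
  neg_mem := fun _ hs => T.neg_mem hs
  zero_mem := T.zero_mem

namespace UPA

variable {Obj : Type*} [Groupoid Obj] {S : Type*} [CommRing S] (α : UPA Obj S)

lemma invSet_one_mem (H : Subgroupoid Obj) : (1 : S) ∈ α.invSet H :=
  fun _ _ h _ => by rw [α.act_one h, one_mul]

lemma invSet_zero_mem (H : Subgroupoid Obj) : (0 : S) ∈ α.invSet H :=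
  fun _ _ h _ => by rw [α.act_zero h, zero_mul]

lemma invSet_add_mem (H : Subgroupoid Obj) {s t : S} (hs : s ∈ α.invSet H)
    (ht : t ∈ α.invSet H) : s + t ∈ α.invSet H :=
  fun _ _ h hH => by rw [α.act_add h, hs h hH, ht h hH, add_mul]

lemma invSet_mul_mem (H : Subgroupoid Obj) {s t : S} (hs : s ∈ α.invSet H)
    (ht : t ∈ α.invSet H) : s * t ∈ α.invSet H :=
  fun _ _ h hH => by
    rw [α.act_mul h, hs h hH, ht h hH, mul_mul_mul_comm, α.idem h]

lemma invSet_neg_mem (H : Subgroupoid Obj) {s : S} (hs : s ∈ α.invSet H) :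
    -s ∈ α.invSet H :=
  fun _ _ h hH => by rw [α.act_neg h, hs h hH, neg_mul]

/-- The subring of invariants `S^{α_H}` of `S`, a genuine unital subring of `S`. -/
def invariantsSubring (H : Subgroupoid Obj) : Subring S where
  carrier := α.invSet H
  one_mem' := α.invSet_one_mem H
  zero_mem' := α.invSet_zero_mem H
  add_mem' := α.invSet_add_mem H
  mul_mem' := α.invSet_mul_mem H
  neg_mem' := α.invSet_neg_mem H

/-- `S^{α_H}` as a corner subring of `S` (with identity `1`). -/
def invariantsSC (H : Subgroupoid Obj) : SubCorner S where
  carrier := α.invSet H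
  unit := 1
  unit_mem := α.invSet_one_mem H
  mul_unit := fun s _ => mul_one s
  add_mem := fun _ _ hs ht => α.invSet_add_mem H hs ht
  mul_mem := fun _ _ hs ht => α.invSet_mul_mem H hs ht
  neg_mem := fun _ hs => α.invSet_neg_mem H hs
  zero_mem := α.invSet_zero_mem H

lemma grpInvSet_unit_mem (y : Obj) (A : Set (y ⟶ y)) :
    α.e (𝟙 y) ∈ α.grpInvSet y A := by
  refine ⟨α.idem (𝟙 y), fun g _ => ?_⟩
  rw [α.act_e_src g]
  have : α.e (𝟙 y) * α.e g = α.e g := by rw [mul_comm]; exact α.e_le g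
  rw [this]

/-- `S_y^{α_A}` as a corner subring of `S` (with identity `1_y`). -/
def grpInvSC (y : Obj) (A : Set (y ⟶ y)) : SubCorner S where
  carrier := α.grpInvSet y A
  unit := α.e (𝟙 y)
  unit_mem := α.grpInvSet_unit_mem y A
  mul_unit := fun _ hs => hs.1
  add_mem := fun s t hs ht =>
    ⟨by rw [add_mul, hs.1, ht.1], fun g hg => by
      rw [α.act_add g, hs.2 g hg, ht.2 g hg, add_mul]⟩
  mul_mem := fun s t hs ht =>
    ⟨by rw [mul_assoc, ht.1], fun g hg => by
      rw [α.act_mul g, hs.2 g hg, ht.2 g hg, mul_mul_mul_comm, α.idem g]⟩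
  neg_mem := fun s hs =>
    ⟨by rw [neg_mul, hs.1], fun g hg => by rw [α.act_neg g, hs.2 g hg, neg_mul]⟩
  zero_mem := ⟨zero_mul _, fun g _ => by rw [α.act_zero g, zero_mul]⟩

lemma invSet_le (H : Subgroupoid Obj) :
    α.invSet (Subgroupoid.full (Set.univ : Set Obj)) ⊆ α.invSet H :=
  fun _ hs _ _ h _ => hs h ⟨trivial, trivial⟩

lemma invSet_le_subring {T : Subring S}
    (h : ∀ s ∈ α.invSet (Subgroupoid.full (Set.univ : Set Obj)), s ∈ T) :
    (α.invariantsSC (Subgroupoid.full (Set.univ : Set Obj))).carrier ⊆ (Subring.toSC T).carrier :=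
  h

lemma grpInvSet_le (y : Obj) (A : Set (y ⟶ y)) :
    α.grpInvSet y (Set.univ : Set (y ⟶ y)) ⊆ α.grpInvSet y A :=
  fun _ hs => ⟨hs.1, fun g _ => hs.2 g trivial⟩

end UPA

/-! Write `T = S^{α_ℋ}` and call an arrow `σ : a ⟶ b` full when `S_σ = S_b` and
`S_{σ⁻¹} = S_a`. Precomposing with a full arrow of `ℋ` changes neither the action on `T` nor
the ideals involved, and postcomposing with a full arrow `δ` of `𝒢` transports idempotents
isomorphically along `α_δ`. Hence strongness of `T` at any pair `(a, b)` follows from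
strongness at the base point `y_j` of the `ℋ`-component of `a`, where
`T·1_{y_j} = S_{y_j}^{α_{ℋ_j(y_j)}}`. For (ii), a pair `g, h` whose sources lie in one
`ℋ`-component reduces to a pair with a common source; if the sources lie in different
components, the unit of the component of one of them is an idempotent of `T` separating `g`
from `h`. -/

lemma _root_.CategoryTheory.Subgroupoid.arrows_nonempty_trans {Obj : Type*} [Groupoid Obj]
    (H : Subgroupoid Obj) {a b c : Obj} (hab : (H.arrows a b).Nonempty)
    (hbc : (H.arrows b c).Nonempty) : (H.arrows a c).Nonempty :=
  let ⟨_, hp⟩ := hab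
  let ⟨_, hq⟩ := hbc
  ⟨_, H.mul hp hq⟩

namespace UPA

variable {Obj : Type*} [Groupoid Obj] {S : Type*} [CommRing S] (α : UPA Obj S)

lemma e_id_mul_e {a b : Obj} (g : a ⟶ b) : α.e (𝟙 b) * α.e g = α.e g := by
  rw [mul_comm, α.e_le]

lemma act_mul_e_id_src {a b : Obj} (g : a ⟶ b) (s : S) :
    α.act g (s * α.e (𝟙 a)) = α.act g s := by
  rw [← α.act_proj g (s * _), mul_assoc, α.e_id_mul_e, α.act_proj]

lemma act_mul_e_id_tgt {a b : Obj} (g : a ⟶ b) (s : S) :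
    α.act g s * α.e (𝟙 b) = α.act g s := by
  rw [← α.act_mem g s, mul_assoc, α.e_le]

lemma act_comp_of_e_eq {a b c : Obj} (k : a ⟶ b) {δ : b ⟶ c} (hδ : α.e δ = α.e (𝟙 c))
    (s : S) : α.act (k ≫ δ) s = α.act δ (α.act k s) := by
  rw [α.act_comp, hδ, α.act_mul_e_id_tgt]

lemma e_comp_of_e_eq {a b c : Obj} (k : a ⟶ b) {δ : b ⟶ c} (hδ : α.e δ = α.e (𝟙 c)) :
    α.e (k ≫ δ) = α.act δ (α.e k) := by
  rw [← α.act_one, α.act_comp_of_e_eq k hδ, α.act_one]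

def IsFull {a b : Obj} (σ : a ⟶ b) : Prop :=
  α.e (Groupoid.inv σ) = α.e (𝟙 a) ∧ α.e σ = α.e (𝟙 b)

variable {α}

lemma isFull_id (a : Obj) : α.IsFull (𝟙 a) := by
  simp [IsFull]

lemma IsFull.inv {a b : Obj} {σ : a ⟶ b} (hσ : α.IsFull σ) : α.IsFull (Groupoid.inv σ) := by
  simpa [IsFull, and_comm] using hσ

lemma IsFull.e_comp {a b c : Obj} {σ : a ⟶ b} (hσ : α.IsFull σ) (k : b ⟶ c) :
    α.e (σ ≫ k) = α.e k := by
  have hle : α.e k = α.e (σ ≫ k) * α.e k := by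
    simpa [α.act_one, hσ.2, α.act_e_src] using α.act_comp σ k 1
  have hge : α.e (σ ≫ k) = α.e k * α.e (σ ≫ k) := by
    have h := α.act_comp (Groupoid.inv σ) (σ ≫ k) 1
    rw [α.act_one, hσ.1, α.act_e_src] at h
    simpa [α.act_one] using h
  rw [hge, mul_comm, ← hle]

lemma IsFull.act_comp {a b c : Obj} {σ : a ⟶ b} (hσ : α.IsFull σ) (k : b ⟶ c) (s : S) :
    α.act (σ ≫ k) s = α.act k (α.act σ s) := by
  rw [α.act_comp, ← hσ.e_comp k, α.act_mem]

lemma IsFull.comp {a b c : Obj} {σ : a ⟶ b} {σ' : b ⟶ c} (hσ : α.IsFull σ)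
    (hσ' : α.IsFull σ') : α.IsFull (σ ≫ σ') := by
  refine ⟨?_, by rw [hσ.e_comp, hσ'.2]⟩
  have h := hσ'.inv.e_comp (Groupoid.inv σ)
  simp only [Groupoid.inv_eq_inv] at h ⊢
  rw [IsIso.inv_comp, h, ← Groupoid.inv_eq_inv, hσ.1]

lemma IsFull.act_injective {a b : Obj} {σ : a ⟶ b} (hσ : α.IsFull σ) {u v : S}
    (hu : u * α.e (𝟙 a) = u) (hv : v * α.e (𝟙 a) = v) (h : α.act σ u = α.act σ v) :
    u = v := by
  have h' := congrArg (α.act (Groupoid.inv σ)) h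
  rwa [α.act_inv, α.act_inv, hσ.1, hu, hv] at h'

lemma inv_mem_fixingSet {T : Set S} {a b : Obj} {k : a ⟶ b} (hk : k ∈ α.fixingSet T a b) :
    Groupoid.inv k ∈ α.fixingSet T b a := by
  intro t ht
  have hproj := α.act_proj (Groupoid.inv k) t
  rw [show Groupoid.inv (Groupoid.inv k) = k by simp] at hproj
  have h := α.act_inv k t
  rwa [hk t ht, hproj] at h

lemma inv_mem_fixingSet_iff {T : Set S} {a b : Obj} {k : a ⟶ b} :
    Groupoid.inv k ∈ α.fixingSet T b a ↔ k ∈ α.fixingSet T a b := by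
  refine ⟨fun hk => ?_, inv_mem_fixingSet⟩
  simpa using inv_mem_fixingSet hk

lemma id_mem_fixingSet (T : Set S) (a : Obj) : 𝟙 a ∈ α.fixingSet T a a :=
  fun t _ => α.act_id a t

lemma mem_fixingSet_cornerSet_iff {T : Set S} {a : Obj} {l : a ⟶ a} :
    l ∈ α.fixingSet (α.cornerSet T a) a a ↔ l ∈ α.fixingSet T a a := by
  simp [fixingSet, cornerSet, α.act_mul_e_id_src, mul_assoc, α.e_id_mul_e]

lemma IsFull.act_comp_of_mem_fixingSet {T : Set S} {a b c : Obj} {σ : a ⟶ b}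
    (hσ : α.IsFull σ) (hσT : σ ∈ α.fixingSet T a b) (k : b ⟶ c) {t : S} (ht : t ∈ T) :
    α.act (σ ≫ k) t = α.act k t := by
  rw [hσ.act_comp, hσT t ht, hσ.2, α.act_mul_e_id_src]

lemma IsFull.comp_mem_fixingSet_iff {T : Set S} {a b c : Obj} {σ : a ⟶ b}
    (hσ : α.IsFull σ) (hσT : σ ∈ α.fixingSet T a b) {k : b ⟶ c} :
    σ ≫ k ∈ α.fixingSet T a c ↔ k ∈ α.fixingSet T b c := by
  refine forall₂_congr fun t ht => ?_
  rw [hσ.act_comp_of_mem_fixingSet hσT k ht, hσ.e_comp]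

lemma IsFull.comp_inv_mem_fixingSet_iff {T : Set S} {a b c : Obj} {σ : c ⟶ b}
    (hσ : α.IsFull σ) (hσT : σ ∈ α.fixingSet T c b) {k : a ⟶ b} :
    k ≫ Groupoid.inv σ ∈ α.fixingSet T a c ↔ k ∈ α.fixingSet T a b := by
  rw [← inv_mem_fixingSet_iff,
    show Groupoid.inv (k ≫ Groupoid.inv σ) = σ ≫ Groupoid.inv k by simp,
    hσ.comp_mem_fixingSet_iff hσT, inv_mem_fixingSet_iff]

variable (α)

def Separates (T : Set S) {a b c : Obj} (g : a ⟶ c) (h : b ⟶ c) : Prop :=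
  ∀ f : S, f * f = f → f ≠ 0 → (f * α.e g = f ∨ f * α.e h = f) →
    ∃ t ∈ T, α.act g t * f ≠ α.act h t * f

def StrongPair (T : Set S) {a b c : Obj} (g : a ⟶ c) (h : b ⟶ c) : Prop :=
  h ≫ Groupoid.inv g ∉ α.fixingSet T b a → α.Separates T g h

lemma strongAt_iff (T : Set S) (a b : Obj) :
    α.strongAt T a b ↔ ∀ g h : a ⟶ b, α.StrongPair T g h :=
  Iff.rfl

variable {α}

lemma separates_congr {T : Set S} {a b a' b' c : Obj} {g : a ⟶ c} {h : b ⟶ c} {g' : a' ⟶ c}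
    {h' : b' ⟶ c} (hg : ∀ t ∈ T, α.act g' t = α.act g t)
    (hh : ∀ t ∈ T, α.act h' t = α.act h t)
    (heg : α.e g' = α.e g) (heh : α.e h' = α.e h) :
    α.Separates T g' h' ↔ α.Separates T g h := by
  simp only [Separates, heg, heh]
  refine forall₄_congr fun _ _ _ _ => exists_congr fun t => and_congr_right fun ht => ?_
  rw [hg t ht, hh t ht]

lemma separates_cornerSet_iff {T : Set S} {a c : Obj} {g : a ⟶ c} {h : a ⟶ c} :
    α.Separates (α.cornerSet T a) g h ↔ α.Separates T g h := by
  simp [Separates, cornerSet, α.act_mul_e_id_src]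

lemma strongPair_cornerSet_iff {T : Set S} {a c : Obj} {g h : a ⟶ c} :
    α.StrongPair (α.cornerSet T a) g h ↔ α.StrongPair T g h := by
  rw [StrongPair, StrongPair, mem_fixingSet_cornerSet_iff, separates_cornerSet_iff]

lemma strongPair_comp_iff {T : Set S} {a b a' b' c : Obj} {σ : a' ⟶ a} {σ' : b' ⟶ b}
    (hσ : α.IsFull σ) (hσT : σ ∈ α.fixingSet T a' a) (hσ' : α.IsFull σ')
    (hσ'T : σ' ∈ α.fixingSet T b' b) {g : a ⟶ c} {h : b ⟶ c} :
    α.StrongPair T (σ ≫ g) (σ' ≫ h) ↔ α.StrongPair T g h := by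
  have hfix : (σ' ≫ h) ≫ Groupoid.inv (σ ≫ g) =
      σ' ≫ (h ≫ Groupoid.inv g) ≫ Groupoid.inv σ := by
    simp
  rw [StrongPair, StrongPair, hfix, hσ'.comp_mem_fixingSet_iff hσ'T,
    hσ.comp_inv_mem_fixingSet_iff hσT,
    separates_congr (fun _ => hσ.act_comp_of_mem_fixingSet hσT g)
      (fun _ => hσ'.act_comp_of_mem_fixingSet hσ'T h) (hσ.e_comp g) (hσ'.e_comp h)]

lemma IsFull.separates_of_comp {T : Set S} {a b c : Obj} {g h : a ⟶ b} {δ : b ⟶ c}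
    (hδ : α.IsFull δ) (hsep : α.Separates T (g ≫ δ) (h ≫ δ)) : α.Separates T g h := by
  intro f hf hf0 hfgh
  have hfb : f * α.e (𝟙 b) = f := by
    rcases hfgh with hfg | hfh
    · rw [← hfg, mul_assoc, α.e_le]
    · rw [← hfh, mul_assoc, α.e_le]
  have hδf : α.act δ f ≠ 0 := fun h0 =>
    hf0 (hδ.act_injective hfb (zero_mul _) (by rw [h0, α.act_zero]))
  have hδfe : ∀ k : a ⟶ b, f * α.e k = f → α.act δ f * α.e (k ≫ δ) = α.act δ f :=
    fun k hk => by rw [α.e_comp_of_e_eq k hδ.2, ← α.act_mul, hk]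
  obtain ⟨t, ht, hne⟩ := hsep (α.act δ f) (by rw [← α.act_mul, hf]) hδf
    (hfgh.imp (hδfe g) (hδfe h))
  refine ⟨t, ht, fun heq => hne ?_⟩
  rw [α.act_comp_of_e_eq g hδ.2, α.act_comp_of_e_eq h hδ.2, ← α.act_mul, ← α.act_mul, heq]

lemma IsFull.strongPair_of_comp {T : Set S} {a b c : Obj} {g h : a ⟶ b} {δ : b ⟶ c}
    (hδ : α.IsFull δ) (hpair : α.StrongPair T (g ≫ δ) (h ≫ δ)) : α.StrongPair T g h := by
  intro hgh
  refine hδ.separates_of_comp (hpair ?_)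
  simpa using hgh

lemma strongAt_cornerSet_of_isFull {T : Set S} {y a b : Obj} {σ : y ⟶ a} {δ : b ⟶ y}
    (hσ : α.IsFull σ) (hσT : σ ∈ α.fixingSet T y a) (hδ : α.IsFull δ)
    (hy : α.strongAt (α.cornerSet T y) y y) : α.strongAt (α.cornerSet T a) a b := by
  refine (strongAt_iff α _ a b).mpr fun g h => strongPair_cornerSet_iff.mpr ?_
  refine hδ.strongPair_of_comp ?_
  rw [← strongPair_comp_iff hσ hσT hσ hσT, ← strongPair_cornerSet_iff]
  exact hy _ _

lemma act_act_eq_of_loop_fixes {y a b : Obj} {σa : y ⟶ a} {σb : y ⟶ b} (ha : α.IsFull σa)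
    (hb : α.IsFull σb) (k : a ⟶ b) {s : S}
    (hs : α.act (σa ≫ k ≫ Groupoid.inv σb) s = s * α.e (σa ≫ k ≫ Groupoid.inv σb)) :
    α.act k (α.act σa s) = α.act σb s * α.e k := by
  have hloop : (σa ≫ k ≫ Groupoid.inv σb) ≫ σb = σa ≫ k := by simp
  calc α.act k (α.act σa s) = α.act (σa ≫ k) s := (ha.act_comp k s).symm
    _ = α.act σb (α.act (σa ≫ k ≫ Groupoid.inv σb) s) := by
      rw [← α.act_comp_of_e_eq _ hb.2, hloop]
    _ = α.act σb s * α.act σb (α.e (σa ≫ k ≫ Groupoid.inv σb)) := by rw [hs, α.act_mul]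
    _ = α.act σb s * α.e k := by rw [← α.e_comp_of_e_eq _ hb.2, hloop, ha.e_comp]

lemma mem_fixingSet_invSet {H : Subgroupoid Obj} {a b : Obj} {k : a ⟶ b}
    (hk : k ∈ H.arrows a b) : k ∈ α.fixingSet (α.invSet H) a b :=
  fun _ ht => ht k hk

lemma IsGroupTypeAt.of_arrows_nonempty {H : Subgroupoid Obj} {y u : Obj}
    (hgt : α.IsGroupTypeAt H y) (hu : (H.arrows y u).Nonempty) : α.IsGroupTypeAt H u := by
  obtain ⟨σ, hσH, -, hσ⟩ := hgt
  have hyv : ∀ v, (H.arrows u v).Nonempty → (H.arrows y v).Nonempty :=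
    fun _ => H.arrows_nonempty_trans hu
  exact ⟨fun v hv => Groupoid.inv (σ u hu) ≫ σ v (hyv v hv),
    fun v hv => H.mul (H.inv (hσH u hu)) (hσH v (hyv v hv)), fun _ => by simp,
    fun v hv => IsFull.comp (IsFull.inv (hσ u hu)) (hσ v (hyv v hv))⟩

variable (α)

lemma cornerSet_invSet_subset (H : Subgroupoid Obj) (y : Obj) :
    α.cornerSet (α.invSet H) y ⊆ α.grpInvSet y (H.arrows y y) := by
  rintro _ ⟨t, ht, rfl⟩
  exact ⟨by rw [mul_assoc, α.idem], fun g hg => by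
    rw [α.act_mul_e_id_src, ht g hg, mul_assoc, α.e_id_mul_e]⟩

section FiniteObjects

variable [Fintype Obj]

lemma sum_mul_e_id (horth : Pairwise fun y z : Obj => α.e (𝟙 y) * α.e (𝟙 z) = 0)
    {s : Obj → S} (hs : ∀ z, s z * α.e (𝟙 z) = s z) (w : Obj) :
    (∑ z, s z) * α.e (𝟙 w) = s w := by
  rw [Finset.sum_mul, Finset.sum_eq_single w
    (fun z _ hzw => by rw [← hs z, mul_assoc, horth hzw, mul_zero]) (by simp), hs]

/-- An invariant of the isotropy `ℋ(y)` spreads along the transversal to an invariant of `ℋ`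
supported on the `ℋ`-component of `y`. -/
lemma cornerSet_invSet_eq
    (horth : Pairwise fun y z : Obj => α.e (𝟙 y) * α.e (𝟙 z) = 0) {H : Subgroupoid Obj}
    {y : Obj} (hgt : α.IsGroupTypeAt H y) (hy : y ∈ H.objs) :
    α.cornerSet (α.invSet H) y = α.grpInvSet y (H.arrows y y) := by
  classical
  refine (α.cornerSet_invSet_subset H y).antisymm fun s ⟨hsy, hs⟩ => ?_
  obtain ⟨σ, hσH, hσy, hσ⟩ := hgt
  set t : S := ∑ z, if hz : (H.arrows y z).Nonempty then α.act (σ z hz) s else 0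
  have ht : ∀ w,
      t * α.e (𝟙 w) = if hw : (H.arrows y w).Nonempty then α.act (σ w hw) s else 0 :=
    α.sum_mul_e_id horth fun z => by split_ifs <;> simp [α.act_mul_e_id_tgt]
  refine ⟨t, fun a b k hk => ?_, show t * _ = s by
    rw [ht, dif_pos (show (H.arrows y y).Nonempty from hy), hσy, α.act_id, hsy]⟩
  rw [← α.act_mul_e_id_src, ← α.e_id_mul_e k, ← mul_assoc, ht, ht]
  by_cases ha : (H.arrows y a).Nonempty
  · have hb := H.arrows_nonempty_trans ha ⟨k, hk⟩
    rw [dif_pos ha, dif_pos hb]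
    exact act_act_eq_of_loop_fixes (hσ a ha) (hσ b hb) k
      (hs _ (H.mul (hσH a ha) (H.mul hk (H.inv (hσH b hb)))))
  · have hb : ¬ (H.arrows y b).Nonempty :=
      fun hb => ha (H.arrows_nonempty_trans hb ⟨_, H.inv hk⟩)
    rw [dif_neg ha, dif_neg hb, α.act_zero, zero_mul]

noncomputable def unitOn (Z : Set Obj) : S :=
  ∑ z, Z.indicator (fun z => α.e (𝟙 z)) z

lemma unitOn_mul_e_id
    (horth : Pairwise fun y z : Obj => α.e (𝟙 y) * α.e (𝟙 z) = 0) (Z : Set Obj) (w : Obj) :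
    α.unitOn Z * α.e (𝟙 w) = Z.indicator (fun z => α.e (𝟙 z)) w :=
  α.sum_mul_e_id horth (fun z => by by_cases hz : z ∈ Z <;> simp [hz, α.idem]) w

lemma act_unitOn
    (horth : Pairwise fun y z : Obj => α.e (𝟙 y) * α.e (𝟙 z) = 0) (Z : Set Obj) {a b : Obj}
    (g : a ⟶ b) :
    α.act g (α.unitOn Z) = Z.indicator (fun _ => α.e g) a := by
  rw [← α.act_mul_e_id_src, α.unitOn_mul_e_id horth]
  by_cases ha : a ∈ Z <;> simp [ha, α.act_e_src, α.act_zero]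

lemma unitOn_mul_e
    (horth : Pairwise fun y z : Obj => α.e (𝟙 y) * α.e (𝟙 z) = 0) (Z : Set Obj) {a b : Obj}
    (g : a ⟶ b) :
    α.unitOn Z * α.e g = Z.indicator (fun _ => α.e g) b := by
  rw [← α.e_id_mul_e g, ← mul_assoc, α.unitOn_mul_e_id horth]
  by_cases hb : b ∈ Z <;> simp [hb, α.e_id_mul_e]

lemma unitOn_mem_invSet
    (horth : Pairwise fun y z : Obj => α.e (𝟙 y) * α.e (𝟙 z) = 0) {H : Subgroupoid Obj}
    {Z : Set Obj}
    (hZ : ∀ ⦃a b : Obj⦄ (k : a ⟶ b), k ∈ H.arrows a b → (a ∈ Z ↔ b ∈ Z)) :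
    α.unitOn Z ∈ α.invSet H := by
  intro a b k hk
  rw [α.act_unitOn horth, α.unitOn_mul_e horth]
  by_cases ha : a ∈ Z
  · rw [Set.indicator_of_mem ha, Set.indicator_of_mem ((hZ k hk).mp ha)]
  · rw [Set.indicator_of_notMem ha, Set.indicator_of_notMem (mt (hZ k hk).mpr ha)]

lemma separates_invSet_of_not_nonempty
    (horth : Pairwise fun y z : Obj => α.e (𝟙 y) * α.e (𝟙 z) = 0) {H : Subgroupoid Obj}
    (hwide : H.IsWide) {a b c : Obj} (hab : ¬ (H.arrows a b).Nonempty) (g : a ⟶ c)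
    (h : b ⟶ c) :
    α.Separates (α.invSet H) g h := by
  have hcomp : ∀ u, α.unitOn {z | (H.arrows u z).Nonempty} ∈ α.invSet H := fun u =>
    α.unitOn_mem_invSet horth fun _ _ _ hk =>
      ⟨fun hz => H.arrows_nonempty_trans hz ⟨_, hk⟩,
        fun hz => H.arrows_nonempty_trans hz ⟨_, H.inv hk⟩⟩
  have hba : ¬ (H.arrows b a).Nonempty := fun ⟨k, hk⟩ => hab ⟨_, H.inv hk⟩
  intro f _ hf0 hfgh
  rcases hfgh with hfg | hfh
  · refine ⟨_, hcomp a, ?_⟩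
    have haa : (H.arrows a a).Nonempty := ⟨_, hwide.wide a⟩
    simpa [α.act_unitOn horth, Set.indicator_apply, hab, haa, mul_comm _ f, hfg] using hf0
  · refine ⟨_, hcomp b, ?_⟩
    have hbb : (H.arrows b b).Nonempty := ⟨_, hwide.wide b⟩
    simpa [α.act_unitOn horth, Set.indicator_apply, hba, hbb, mul_comm _ f, hfh, eq_comm]
      using hf0

lemma isStrong_invSet_iff
    (horth : Pairwise fun y z : Obj => α.e (𝟙 y) * α.e (𝟙 z) = 0) {H : Subgroupoid Obj}
    (hwide : H.IsWide) (hgt : α.IsGroupType H) :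
    α.IsStrong (α.invSet H) ↔
      ∀ ⦃a b c : Obj⦄ (g : a ⟶ c) (h : b ⟶ c), α.StrongPair (α.invSet H) g h := by
  refine ⟨fun hst a b c g h => ?_,
    fun hpair a b g h => strongPair_cornerSet_iff.mpr (hpair g h)⟩
  by_cases hab : (H.arrows a b).Nonempty
  · obtain ⟨σ, hσH, -, hσ⟩ := hgt a ⟨_, hwide.wide a⟩
    rw [← strongPair_comp_iff (isFull_id a) (id_mem_fixingSet _ a) (hσ b hab)
      (mem_fixingSet_invSet (hσH b hab)), Category.id_comp, ← strongPair_cornerSet_iff]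
    exact hst a c g _
  · exact fun _ => α.separates_invSet_of_not_nonempty horth hwide hab g h

end FiniteObjects

end UPA

/-- **Proposition 5.4.**  Standing hypotheses, with `1_g ≠ 0` for all `g`.  Let
`ℋ ∈ wSub_gt(𝒢)` with its component data, `T = S^{α_ℋ}` and
`T_{y_j} = S_{y_j}^{α_{ℋ_j(y_j)}}`.  The following are equivalent:
(i) `T` is `α`-strong;
(ii) for any `g, h ∈ 𝒢` with `t(g) = t(h)` and `g⁻¹h ∉ 𝒢_T`, and every nonzero idempotent
`f ∈ S_g ∪ S_h`, there is `t ∈ T` with `α_g(t·1_{g⁻¹})·f ≠ α_h(t·1_{h⁻¹})·f`;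
(iii) `T_{y_j}` is `α_{𝒢(y_j,y_j)}`-strong for all `1 ≤ j ≤ r`. -/
theorem strong_tfae
    {Obj : Type*} [Groupoid Obj] [Fintype Obj] [∀ a b : Obj, Finite (a ⟶ b)]
    {S : Type*} [CommRing S] (α : UPA Obj S)
    (hsum : ∑ y : Obj, α.e (𝟙 y) = 1)
    (horth : ∀ y z : Obj, y ≠ z → α.e (𝟙 y) * α.e (𝟙 z) = 0)
    (hconn : ∀ a b : Obj, Nonempty (a ⟶ b))
    (x : Obj) (τ : ∀ y : Obj, x ⟶ y) (hτx : τ x = 𝟙 x)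
    (hgt : ∀ y : Obj, α.e (Groupoid.inv (τ y)) = α.e (𝟙 x) ∧ α.e (τ y) = α.e (𝟙 y))
    (hne : ∀ ⦃a b : Obj⦄ (g : a ⟶ b), α.e g ≠ 0)
    (H : Subgroupoid Obj) (hwide : H.IsWide)
    (r : ℕ) (Y : Fin r → Set Obj)
    (hYcover : ∀ u : Obj, ∃ j, u ∈ Y j)
    (hYconn : ∀ j, ∀ u ∈ Y j, ∀ v ∈ Y j, (H.arrows u v).Nonempty)
    (hYdisj : ∀ j k, j ≠ k → ∀ u ∈ Y j, ∀ v ∈ Y k, H.arrows u v = ∅)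
    (y : Fin r → Obj) (hy : ∀ j, y j ∈ Y j)
    (τj : ∀ (j : Fin r) (z : Obj), z ∈ Y j → ((y j) ⟶ z))
    (hτjH : ∀ j z hz, τj j z hz ∈ H.arrows (y j) z)
    (hτjid : ∀ j, τj j (y j) (hy j) = 𝟙 (y j))
    (hτjgt : ∀ j z hz, α.e (Groupoid.inv (τj j z hz)) = α.e (𝟙 (y j)) ∧
        α.e (τj j z hz) = α.e (𝟙 z)) :
    (α.IsStrong (α.invSet H) ↔
      (∀ ⦃a b c : Obj⦄ (g : a ⟶ c) (h : b ⟶ c),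
        (h ≫ Groupoid.inv g) ∉ α.fixingSet (α.invSet H) b a →
        ∀ f : S, f * f = f → f ≠ 0 → (f * α.e g = f ∨ f * α.e h = f) →
          ∃ t ∈ α.invSet H, α.act g t * f ≠ α.act h t * f)) ∧
    (α.IsStrong (α.invSet H) ↔
      ∀ j : Fin r,
        α.strongAt (α.grpInvSet (y j) (H.arrows (y j) (y j))) (y j) (y j)) := by
  have hgtY : ∀ j, α.IsGroupTypeAt H (y j) := fun j => by
    have hmem : ∀ v, (H.arrows (y j) v).Nonempty → v ∈ Y j := fun v ⟨k, hk⟩ => by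
      obtain ⟨i, hv⟩ := hYcover v
      by_cases hji : j = i
      · exact hji ▸ hv
      · exact absurd hk (by simp [hYdisj j i hji _ (hy j) v hv])
    exact ⟨fun v hv => τj j v (hmem v hv), fun v hv => hτjH j v (hmem v hv),
      fun _ => hτjid j, fun v hv => hτjgt j v (hmem v hv)⟩
  have hbase : ∀ a, ∃ j, (H.arrows (y j) a).Nonempty :=
    fun a => (hYcover a).imp fun j ha => ⟨_, hτjH j a ha⟩
  have hgtH : α.IsGroupType H :=
    fun a _ => (hbase a).elim fun j hj => (hgtY j).of_arrows_nonempty hj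
  have hcorner : ∀ j,
      α.cornerSet (α.invSet H) (y j) = α.grpInvSet (y j) (H.arrows (y j) (y j)) :=
    fun j => α.cornerSet_invSet_eq horth (hgtY j) ⟨_, hτjH j _ (hy j)⟩
  refine ⟨α.isStrong_invSet_iff horth hwide hgtH, fun hst j => hcorner j ▸ hst _ _,
    fun hbaseStrong a b => ?_⟩
  obtain ⟨j, hj⟩ := hbase a
  obtain ⟨σ, hσH, -, hσ⟩ := hgtY j
  exact UPA.strongAt_cornerSet_of_isFull (hσ a hj) (UPA.mem_fixingSet_invSet (hσH a hj))
    (UPA.IsFull.comp (UPA.IsFull.inv (hgt b)) (hgt (y j))) (hcorner j ▸ hbaseStrong j)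

end PaperGalois
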